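/- Fix m>0. For K∈ℕ let μ_m^K be the probability measure on {(n_1,n_2)∈ℕ² : n_1+n_2=K} with μ_m^K(n, K−n) ∝ Γ(m/2+n)Γ(m/2+K−n)/(n!(K−n)!). Then as K→∞, the law of η_1/K under μ_m^K converges weakly to the Beta(m/2, m/2) distribution on [0,1]: for every x∈[0,1], μ_m^K(η_1 ≤ xK) → (Γ(m)/Γ(m/2)²) ∫_0^x y^{m/2−1}(1−y)^{m/2−1} dy. -/

import Mathlib

/-!
With `a = m/2` and `B(y) = yᵃ⁻¹(1-y)ᵃ⁻¹`, the Beta integral gives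
`Γ(a+n)Γ(a+K-n)/(n!(K-n)!) = Γ(m+K)/K! · ∫₀¹ B(y) C(K,n) yⁿ(1-y)ᴷ⁻ⁿ dy`,
so `μ_m^K` is a Beta`(a, a)` mixture of binomial laws `Bin(K, y)` and
`μ_m^K(η₁ ≤ xK) = ∫₀¹ B(y) P(Bin(K, y) ≤ xK) dy / ∫₀¹ B`.
By Chebyshev's inequality `P(Bin(K, y) ≤ xK) → 1_{y < x}` for `y ≠ x`, and dominated
convergence gives the limit `∫₀ˣ B / ∫₀¹ B`, where `∫₀¹ B = Γ(a)²/Γ(m)`.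
-/

open Filter Topology
open scoped Classical

/-- The unnormalized canonical weight of `(n, K−n)` for the SIP on two sites:
`Γ(m/2+n)Γ(m/2+K−n)/(n!(K−n)!)`. -/
noncomputable def sip2Weight (m : ℝ) (K n : ℕ) : ℝ :=
  Real.Gamma (m / 2 + n) * Real.Gamma (m / 2 + (K - n : ℕ)) /
    (n.factorial * (K - n).factorial)

/-- `μ_m^K(η₁ ≤ x K)`: the canonical probability that the first site carries at most
`x K` particles. -/
noncomputable def sip2CDF (m : ℝ) (K : ℕ) (x : ℝ) : ℝ :=
  (∑ n ∈ Finset.range (K + 1), if (n : ℝ) ≤ x * K then sip2Weight m K n else 0) /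
    ∑ l ∈ Finset.range (K + 1), sip2Weight m K l

open MeasureTheory Finset Set

section Beta

lemma ofReal_rpow_mul_one_sub_rpow {u v y : ℝ} (hy : y ∈ Icc (0 : ℝ) 1) :
    ((y ^ (u - 1) * (1 - y) ^ (v - 1) : ℝ) : ℂ)
      = (y : ℂ) ^ ((u : ℂ) - 1) * (1 - (y : ℂ)) ^ ((v : ℂ) - 1) := by
  rw [Complex.ofReal_mul, Complex.ofReal_cpow hy.1, Complex.ofReal_cpow (sub_nonneg.2 hy.2)]
  push_cast
  rfl

variable {u v : ℝ}

lemma intervalIntegrable_rpow_mul_one_sub_rpow (hu : 0 < u) (hv : 0 < v) :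
    IntervalIntegrable (fun y : ℝ => y ^ (u - 1) * (1 - y) ^ (v - 1)) volume 0 1 := by
  have h := Complex.betaIntegral_convergent (u := u) (v := v) (by simpa) (by simpa)
  rw [intervalIntegrable_iff_integrableOn_Ioc_of_le zero_le_one] at h ⊢
  refine IntegrableOn.congr_fun (Integrable.re h) (fun y hy => ?_) measurableSet_Ioc
  rw [← ofReal_rpow_mul_one_sub_rpow (Ioc_subset_Icc_self hy), RCLike.re_to_complex,
    Complex.ofReal_re]

lemma integral_rpow_mul_one_sub_rpow (hu : 0 < u) (hv : 0 < v) :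
    ∫ y in (0 : ℝ)..1, y ^ (u - 1) * (1 - y) ^ (v - 1)
      = Real.Gamma u * Real.Gamma v / Real.Gamma (u + v) := by
  have hbeta : Complex.betaIntegral u v
      = ((∫ y in (0 : ℝ)..1, y ^ (u - 1) * (1 - y) ^ (v - 1) : ℝ) : ℂ) := by
    rw [Complex.betaIntegral, ← intervalIntegral.integral_ofReal]
    refine intervalIntegral.integral_congr fun y hy => ?_
    rw [Set.uIcc_of_le zero_le_one] at hy
    exact (ofReal_rpow_mul_one_sub_rpow hy).symm
  have key := Complex.betaIntegral_eq_Gamma_mul_div (u := u) (v := v) (by simpa) (by simpa)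
  rw [hbeta, ← Complex.ofReal_add, Complex.Gamma_ofReal, Complex.Gamma_ofReal,
    Complex.Gamma_ofReal] at key
  exact_mod_cast key

end Beta

section Bernstein

variable {K : ℕ} {y : ℝ}

lemma bernsteinPolynomial_eval_eq (K n : ℕ) (y : ℝ) :
    (bernsteinPolynomial ℝ K n).eval y = K.choose n * y ^ n * (1 - y) ^ (K - n) := by
  simp [bernsteinPolynomial]

lemma bernsteinPolynomial_eval_nonneg (n : ℕ) (hy : y ∈ Icc (0 : ℝ) 1) :
    0 ≤ (bernsteinPolynomial ℝ K n).eval y := by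
  rw [bernsteinPolynomial_eval_eq]
  have := sub_nonneg.2 hy.2
  have := hy.1
  positivity

lemma sum_bernsteinPolynomial_eval (K : ℕ) (y : ℝ) :
    ∑ n ∈ range (K + 1), (bernsteinPolynomial ℝ K n).eval y = 1 := by
  simpa [Polynomial.eval_finsetSum]
    using congrArg (Polynomial.eval y) (bernsteinPolynomial.sum ℝ K)

lemma sum_sq_mul_bernsteinPolynomial_eval (K : ℕ) (y : ℝ) :
    ∑ n ∈ range (K + 1), ((K : ℝ) * y - n) ^ 2 * (bernsteinPolynomial ℝ K n).eval y
      = K * y * (1 - y) := by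
  simpa [Polynomial.eval_finsetSum, nsmul_eq_mul]
    using congrArg (Polynomial.eval y) (bernsteinPolynomial.variance ℝ K)

/-- Chebyshev's inequality for the binomial law `Bin(K, y)`. -/
lemma sq_mul_sum_bernsteinPolynomial_eval_le {s : Finset ℕ} (hs : s ⊆ range (K + 1))
    (hy : y ∈ Icc (0 : ℝ) 1) {r : ℝ} (hr : 0 ≤ r)
    (hfar : ∀ n ∈ s, r ≤ |(K : ℝ) * y - n|) :
    r ^ 2 * ∑ n ∈ s, (bernsteinPolynomial ℝ K n).eval y ≤ K * y * (1 - y) := by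
  rw [← sum_sq_mul_bernsteinPolynomial_eval, mul_sum]
  calc ∑ n ∈ s, r ^ 2 * (bernsteinPolynomial ℝ K n).eval y
      ≤ ∑ n ∈ s, ((K : ℝ) * y - n) ^ 2 * (bernsteinPolynomial ℝ K n).eval y := by
        refine sum_le_sum fun n hn => ?_
        refine mul_le_mul_of_nonneg_right ?_ (bernsteinPolynomial_eval_nonneg n hy)
        simpa only [sq_abs] using pow_le_pow_left₀ hr (hfar n hn) 2
    _ ≤ _ := sum_le_sum_of_subset_of_nonneg hs fun n _ _ =>
        mul_nonneg (sq_nonneg _) (bernsteinPolynomial_eval_nonneg n hy)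

lemma tendsto_sum_bernsteinPolynomial_eval_of_far (hy : y ∈ Icc (0 : ℝ) 1) {c : ℝ}
    (hc : 0 < c) {s : ℕ → Finset ℕ} (hs : ∀ K, s K ⊆ range (K + 1))
    (hfar : ∀ K, ∀ n ∈ s K, c * K ≤ |(K : ℝ) * y - n|) :
    Tendsto (fun K => ∑ n ∈ s K, (bernsteinPolynomial ℝ K n).eval y) atTop (𝓝 0) := by
  refine tendsto_of_tendsto_of_tendsto_of_le_of_le' tendsto_const_nhds
    (tendsto_const_div_atTop_nhds_zero_nat (y * (1 - y) / c ^ 2)) ?_ ?_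
  · exact Eventually.of_forall fun K => sum_nonneg fun n _ => bernsteinPolynomial_eval_nonneg n hy
  · filter_upwards [eventually_gt_atTop 0] with K hK
    have hK : (0 : ℝ) < K := Nat.cast_pos.2 hK
    have := sq_mul_sum_bernsteinPolynomial_eval_le (hs K) hy (by positivity) (hfar K)
    rw [div_div, le_div_iff₀ (by positivity)]
    nlinarith

end Bernstein

section BinomialCDF

/-- `P(Bin(K, y) ≤ x K)`. -/
noncomputable def binomialCDF (K : ℕ) (y x : ℝ) : ℝ :=
  ∑ n ∈ (range (K + 1)).filter (fun n : ℕ => (n : ℝ) ≤ x * K),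
    (bernsteinPolynomial ℝ K n).eval y

variable {K : ℕ} {x y : ℝ}

lemma binomialCDF_nonneg (hy : y ∈ Icc (0 : ℝ) 1) : 0 ≤ binomialCDF K y x :=
  sum_nonneg fun n _ => bernsteinPolynomial_eval_nonneg n hy

lemma binomialCDF_le_one (hy : y ∈ Icc (0 : ℝ) 1) : binomialCDF K y x ≤ 1 := by
  rw [← sum_bernsteinPolynomial_eval K y]
  exact sum_le_sum_of_subset_of_nonneg (filter_subset _ _) fun n _ _ =>
    bernsteinPolynomial_eval_nonneg n hy

lemma continuous_binomialCDF (K : ℕ) (x : ℝ) : Continuous fun y => binomialCDF K y x :=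
  continuous_finsetSum _ fun n _ => (bernsteinPolynomial ℝ K n).continuous

lemma tendsto_binomialCDF_of_lt (hy : y ∈ Icc (0 : ℝ) 1) (hyx : y < x) :
    Tendsto (fun K => binomialCDF K y x) atTop (𝓝 1) := by
  have hfar := tendsto_sum_bernsteinPolynomial_eval_of_far hy (sub_pos.2 hyx)
    (s := fun K => (range (K + 1)).filter (fun n : ℕ => ¬ (n : ℝ) ≤ x * K))
    (fun K => filter_subset _ _)
    fun K n hn => by
      have := (mem_filter.1 hn).2
      rw [abs_sub_comm]
      exact le_abs.2 (Or.inl (by nlinarith [(K.cast_nonneg : (0 : ℝ) ≤ K)]))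
  have hsplit (K : ℕ) : binomialCDF K y x
      = 1 - ∑ n ∈ (range (K + 1)).filter (fun n : ℕ => ¬ (n : ℝ) ≤ x * K),
        (bernsteinPolynomial ℝ K n).eval y := by
    rw [← sum_bernsteinPolynomial_eval K y,
      ← sum_filter_add_sum_filter_not _ (fun n : ℕ => (n : ℝ) ≤ x * K), binomialCDF]
    ring
  simpa only [hsplit, sub_zero] using hfar.const_sub 1

lemma tendsto_binomialCDF_of_gt (hy : y ∈ Icc (0 : ℝ) 1) (hxy : x < y) :
    Tendsto (fun K => binomialCDF K y x) atTop (𝓝 0) :=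
  tendsto_sum_bernsteinPolynomial_eval_of_far hy (sub_pos.2 hxy) (fun K => filter_subset _ _)
    fun K n hn => by
      have := (mem_filter.1 hn).2
      exact le_abs.2 (Or.inl (by nlinarith [(K.cast_nonneg : (0 : ℝ) ≤ K)]))

lemma tendsto_integral_mul_binomialCDF {f : ℝ → ℝ} (hf : IntervalIntegrable f volume 0 1)
    (hx : x ∈ Icc (0 : ℝ) 1) :
    Tendsto (fun K => ∫ y in (0 : ℝ)..1, f y * binomialCDF K y x) atTop
      (𝓝 (∫ y in (0 : ℝ)..x, f y)) := by
  have hlim : ∫ y in (0 : ℝ)..x, f y = ∫ y in Ioc (0 : ℝ) 1, (Iic x).indicator f y := by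
    rw [intervalIntegral.integral_of_le hx.1, integral_indicator measurableSet_Iic,
      Measure.restrict_restrict measurableSet_Iic, Iic_inter_Ioc_of_le hx.2]
  rw [intervalIntegrable_iff_integrableOn_Ioc_of_le zero_le_one] at hf
  simp only [intervalIntegral.integral_of_le zero_le_one, hlim]
  refine tendsto_integral_of_dominated_convergence (fun y => ‖f y‖)
    (fun K => hf.aestronglyMeasurable.mul (continuous_binomialCDF K x).aestronglyMeasurable)
    hf.norm (fun K => ?_) ?_
  · filter_upwards [ae_restrict_mem measurableSet_Ioc] with y hy
    have hy := Ioc_subset_Icc_self hy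
    rw [norm_mul, Real.norm_of_nonneg (binomialCDF_nonneg hy)]
    exact mul_le_of_le_one_right (norm_nonneg _) (binomialCDF_le_one hy)
  · -- `binomialCDF K y x → 1_{y ≤ x}` may fail only at `y = x`, a null set
    filter_upwards [ae_restrict_mem measurableSet_Ioc, ae_restrict_of_ae (Measure.ae_ne volume x)]
      with y hy hyx
    have hy := Ioc_subset_Icc_self hy
    rcases hyx.lt_or_gt with hyx | hxy
    · rw [indicator_of_mem (show y ∈ Iic x from hyx.le)]
      simpa using (tendsto_binomialCDF_of_lt hy hyx).const_mul (f y)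
    · rw [indicator_of_notMem (show y ∉ Iic x from not_le.2 hxy)]
      simpa using (tendsto_binomialCDF_of_gt hy hxy).const_mul (f y)

end BinomialCDF

section BetaBinomial

variable {a b : ℝ}

lemma rpow_mul_one_sub_rpow_mul_bernsteinPolynomial_eval {y : ℝ} (hy : y ∈ Ioo (0 : ℝ) 1)
    (K n : ℕ) :
    y ^ (a - 1) * (1 - y) ^ (b - 1) * (bernsteinPolynomial ℝ K n).eval y
      = K.choose n * (y ^ (a + n - 1) * (1 - y) ^ (b + (K - n : ℕ) - 1)) := by
  rw [bernsteinPolynomial_eval_eq, add_sub_right_comm a, add_sub_right_comm b,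
    Real.rpow_add_natCast hy.1.ne', Real.rpow_add_natCast (sub_pos.2 hy.2).ne']
  ring

lemma intervalIntegrable_rpow_mul_one_sub_rpow_mul_bernsteinPolynomial_eval (ha : 0 < a)
    (hb : 0 < b) (K n : ℕ) :
    IntervalIntegrable
      (fun y : ℝ => y ^ (a - 1) * (1 - y) ^ (b - 1) * (bernsteinPolynomial ℝ K n).eval y)
      volume 0 1 := by
  have h := (intervalIntegrable_rpow_mul_one_sub_rpow (u := a + n) (v := b + (K - n : ℕ))
    (by positivity) (by positivity)).const_mul (K.choose n : ℝ)
  rw [intervalIntegrable_iff_integrableOn_Ioo_of_le zero_le_one] at h ⊢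
  exact h.congr_fun (fun y hy => (rpow_mul_one_sub_rpow_mul_bernsteinPolynomial_eval hy K n).symm)
    measurableSet_Ioo

lemma integral_rpow_mul_one_sub_rpow_mul_bernsteinPolynomial_eval (ha : 0 < a) (hb : 0 < b)
    {K n : ℕ} (hn : n ≤ K) :
    ∫ y in (0 : ℝ)..1, y ^ (a - 1) * (1 - y) ^ (b - 1) * (bernsteinPolynomial ℝ K n).eval y
      = K.choose n *
        (Real.Gamma (a + n) * Real.Gamma (b + (K - n : ℕ)) / Real.Gamma (a + b + K)) := by
  have hsum : a + n + (b + (K - n : ℕ)) = a + b + K := by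
    rw [Nat.cast_sub hn]
    ring
  rw [← hsum, ← integral_rpow_mul_one_sub_rpow (by positivity) (by positivity),
    ← intervalIntegral.integral_const_mul, intervalIntegral.integral_of_le zero_le_one,
    intervalIntegral.integral_of_le zero_le_one, integral_Ioc_eq_integral_Ioo,
    integral_Ioc_eq_integral_Ioo]
  exact setIntegral_congr_fun measurableSet_Ioo fun y hy =>
    rpow_mul_one_sub_rpow_mul_bernsteinPolynomial_eval hy K n

lemma gamma_mul_gamma_div_factorial_mul_factorial_eq_integral (ha : 0 < a) (hb : 0 < b)
    {K n : ℕ} (hn : n ≤ K) :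
    Real.Gamma (a + n) * Real.Gamma (b + (K - n : ℕ)) / (n.factorial * (K - n).factorial)
      = Real.Gamma (a + b + K) / K.factorial *
        ∫ y in (0 : ℝ)..1,
          y ^ (a - 1) * (1 - y) ^ (b - 1) * (bernsteinPolynomial ℝ K n).eval y := by
  rw [integral_rpow_mul_one_sub_rpow_mul_bernsteinPolynomial_eval ha hb hn, Nat.cast_choose ℝ hn]
  have : Real.Gamma (a + b + K) ≠ 0 := (Real.Gamma_pos_of_pos (by positivity)).ne'
  field_simp

end BetaBinomial

lemma sum_sip2Weight_eq_integral {m : ℝ} (hm : 0 < m) {K : ℕ} {s : Finset ℕ}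
    (hs : s ⊆ range (K + 1)) :
    ∑ n ∈ s, sip2Weight m K n = Real.Gamma (m + K) / K.factorial *
      ∫ y in (0 : ℝ)..1, y ^ (m / 2 - 1) * (1 - y) ^ (m / 2 - 1) *
        ∑ n ∈ s, (bernsteinPolynomial ℝ K n).eval y := by
  simp_rw [mul_sum]
  rw [intervalIntegral.integral_finsetSum fun n _ =>
    intervalIntegrable_rpow_mul_one_sub_rpow_mul_bernsteinPolynomial_eval (by positivity)
      (by positivity) K n, mul_sum]
  refine sum_congr rfl fun n hn => ?_
  rw [sip2Weight, gamma_mul_gamma_div_factorial_mul_factorial_eq_integral (by positivity)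
    (by positivity) (Nat.lt_succ_iff.1 (mem_range.1 (hs hn))), add_halves]

lemma sip2CDF_eq_integral_div {m : ℝ} (hm : 0 < m) (K : ℕ) (x : ℝ) :
    sip2CDF m K x
      = (∫ y in (0 : ℝ)..1, y ^ (m / 2 - 1) * (1 - y) ^ (m / 2 - 1) * binomialCDF K y x)
        / ∫ y in (0 : ℝ)..1, y ^ (m / 2 - 1) * (1 - y) ^ (m / 2 - 1) := by
  have hc : Real.Gamma (m + K) / K.factorial ≠ 0 :=
    (div_pos (Real.Gamma_pos_of_pos (by positivity)) (by positivity)).ne'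
  rw [sip2CDF, ← sum_filter, sum_sip2Weight_eq_integral hm (filter_subset _ _),
    sum_sip2Weight_eq_integral hm subset_rfl, mul_div_mul_left _ _ hc]
  simp only [sum_bernsteinPolynomial_eval, mul_one, binomialCDF]

/-- **Beta limit for the SIP on two sites**: as `K → ∞`, the law of `η₁/K` under the
canonical measure `μ_m^K` converges weakly to the Beta`(m/2, m/2)` distribution, i.e.
`μ_m^K(η₁ ≤ xK) → (Γ(m)/Γ(m/2)²) ∫_0^x y^{m/2−1}(1−y)^{m/2−1} dy` for every `x ∈ [0,1]`. -/
theorem sip_two_site_beta_limit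
    (m : ℝ) (hm : 0 < m) (x : ℝ) (hx : x ∈ Set.Icc (0 : ℝ) 1) :
    Tendsto (fun K : ℕ => sip2CDF m K x) atTop
      (𝓝 (Real.Gamma m / (Real.Gamma (m / 2)) ^ 2 *
        ∫ y in (0 : ℝ)..x, y ^ (m / 2 - 1) * (1 - y) ^ (m / 2 - 1))) := by
  have ha : 0 < m / 2 := half_pos hm
  have hbeta : ∫ y in (0 : ℝ)..1, y ^ (m / 2 - 1) * (1 - y) ^ (m / 2 - 1)
      = Real.Gamma (m / 2) ^ 2 / Real.Gamma m := by
    rw [integral_rpow_mul_one_sub_rpow ha ha, add_halves, sq]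
  simp_rw [sip2CDF_eq_integral_div hm, hbeta]
  convert (tendsto_integral_mul_binomialCDF
    (intervalIntegrable_rpow_mul_one_sub_rpow ha ha) hx).div_const _ using 2
  rw [div_div_eq_mul_div]
  ring
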